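/- arXiv:1305.2432 — 3 statements merged into one kernel-verified Lean document; each statement's English description precedes it below -/
import Mathlib

section
/- Let x be a mixed Nash equilibrium of an N-player game v, and suppose a* is a pure action profile in the support of x such that for every player i and every action b ∈ Aᵢ, |vᵢ(b, a*₋ᵢ) − vᵢ(b, x₋ᵢ)| ≤ ε/2. Then a* is a pure Nash ε-equilibrium of v. -/
noncomputable section

/-- Expected payoff of `v` under a mixed profile `x`, for general action sets. -/
def expPayG {N : ℕ} {A : Fin N → Type*} [∀ i, Fintype (A i)]
    (v : (∀ i, A i) → ℝ) (x : ∀ i, A i → ℝ) : ℝ :=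
  ∑ a : ∀ i, A i, (∏ i, x i (a i)) * v a

/-- The point mass at action `b`. -/
def pureG {N : ℕ} {A : Fin N → Type*} [∀ i, DecidableEq (A i)] {i : Fin N} (b : A i) :
    A i → ℝ :=
  fun j => if j = b then 1 else 0

lemma aux_prod {N : ℕ} {A : Fin N → Type*} [∀ i, Fintype (A i)] [∀ i, DecidableEq (A i)]
    (x : ∀ i, A i → ℝ) (i : Fin N) (b : A i) (a : ∀ i, A i) :
    ∏ j, (Function.update x i (pureG b)) j (a j)
      = pureG b (a i) * ∏ j ∈ Finset.univ.erase i, x j (a j) := by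
  rw [← Finset.mul_prod_erase _ _ (Finset.mem_univ i), Function.update_self]
  congr 1
  exact Finset.prod_congr rfl fun j hj => by
    rw [Function.update_of_ne (Finset.ne_of_mem_erase hj)]

lemma aux_decomp {N : ℕ} {A : Fin N → Type*} [∀ i, Fintype (A i)] [∀ i, DecidableEq (A i)]
    (v : (∀ i, A i) → ℝ) (x : ∀ i, A i → ℝ) (i : Fin N) :
    ∑ b : A i, x i b * expPayG v (Function.update x i (pureG b)) = expPayG v x := by
  unfold expPayG
  simp only [Finset.mul_sum]
  rw [Finset.sum_comm]
  refine Finset.sum_congr rfl fun a _ => ?_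
  simp only [aux_prod, pureG]
  set P := ∏ j ∈ Finset.univ.erase i, x j (a j) with hP
  have h1 : ∀ b ∈ (Finset.univ : Finset (A i)),
      x i b * (((if a i = b then (1:ℝ) else 0) * P) * v a)
      = if a i = b then x i b * P * v a else 0 := by
    intro b _; split <;> simp <;> ring
  rw [Finset.sum_congr rfl h1, Finset.sum_ite_eq]
  simp only [Finset.mem_univ, if_true]
  rw [← Finset.mul_prod_erase Finset.univ (fun j => x j (a j)) (Finset.mem_univ i)]

/-- If `x` is a (mixed) Nash equilibrium of `v` and `a*` is a pure profile in the support
of `x` such that `|vᵢ(b, a*₋ᵢ) − vᵢ(b, x₋ᵢ)| ≤ ε/2` for every player `i` and action `b`,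
then `a*` is a pure Nash ε-equilibrium of `v`. -/
theorem stmt_7 {N : ℕ} {A : Fin N → Type*} [∀ i, Fintype (A i)] [∀ i, DecidableEq (A i)]
    (v : Fin N → (∀ i, A i) → ℝ)
    (x : ∀ i, A i → ℝ) (hnn : ∀ i b, 0 ≤ x i b) (hsum : ∀ i, ∑ b, x i b = 1)
    (hNash : ∀ (i : Fin N) (b : A i),
      expPayG (v i) (Function.update x i (pureG b)) ≤ expPayG (v i) x)
    (ε : ℝ) (hε : 0 ≤ ε)
    (astar : ∀ i, A i) (hsupp : ∀ i, 0 < x i (astar i))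
    (hclose : ∀ (i : Fin N) (b : A i),
      |v i (Function.update astar i b) -
        expPayG (v i) (Function.update x i (pureG b))| ≤ ε / 2) :
    ∀ (i : Fin N) (b : A i), v i (Function.update astar i b) - ε ≤ v i astar := by
  intro i b
  have hM : expPayG (v i) x ≤ expPayG (v i) (Function.update x i (pureG (astar i))) := by
    by_contra hlt
    push_neg at hlt
    have hs : ∑ c : A i, x i c * expPayG (v i) (Function.update x i (pureG c))
        < ∑ c : A i, x i c * expPayG (v i) x :=
      Finset.sum_lt_sum
        (fun c _ => mul_le_mul_of_nonneg_left (hNash i c) (hnn i c))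
        ⟨astar i, Finset.mem_univ _, mul_lt_mul_of_pos_left hlt (hsupp i)⟩
    rw [aux_decomp, ← Finset.sum_mul, hsum i, one_mul] at hs
    exact lt_irrefl _ hs
  have h1 := abs_sub_le_iff.mp (hclose i b)
  have h2 := hNash i b
  have h4 := abs_sub_le_iff.mp (hclose i (astar i))
  rw [Function.update_eq_self] at h4
  linarith [h1.1, h4.2]
end
end

section
/- Let u be an n-player game and k ∈ ℕ. Define the kn-player game v by splitting each player i into k copies i(1),…,i(k), each with action set Aᵢ, where the payoff of copy i₀(j₀) at the profile (a_{i(j)}) is uᵢ₀ evaluated at its own action a_{i₀(j₀)} against, for every other population i ≠ i₀, the average mixed strategy (1/k)·Σⱼ a_{i(j)} (actions identified with unit vectors in ℝ^m). Then v is (1/k)-Lipschitz: changing the action of a single player changes any other player's payoff by at most 1/k (assuming u has payoffs in [0,1] and is multilinear in each opponent's mixed strategy). -/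
noncomputable section

/-- Multilinear extension: expected payoff of `u` under the mixed profile `x`. -/
def expPay {n m : ℕ} (u : (Fin n → Fin m) → ℝ) (x : Fin n → Fin m → ℝ) : ℝ :=
  ∑ a : Fin n → Fin m, (∏ i, x i (a i)) * u a

/-- The point mass at action `b`. -/
def pureStrat {m : ℕ} (b : Fin m) : Fin m → ℝ := fun j => if j = b then 1 else 0

/-- `x` is a profile of mixed strategies. -/
def IsMixedProfile {n m : ℕ} (x : Fin n → Fin m → ℝ) : Prop :=
  (∀ i j, 0 ≤ x i j) ∧ ∀ i, ∑ j, x i j = 1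

/-- Nash ε-equilibrium: no player gains more than `ε` by a unilateral pure deviation. -/
def IsNashEq {n m : ℕ} (u : Fin n → (Fin n → Fin m) → ℝ)
    (x : Fin n → Fin m → ℝ) (ε : ℝ) : Prop :=
  ∀ (i : Fin n) (b : Fin m),
    expPay (u i) (Function.update x i (pureStrat b)) - ε ≤ expPay (u i) x

/-- Every probability in `x` is an integer multiple of `1/k`. -/
def IsKUniform {n m : ℕ} (k : ℕ) (x : Fin n → Fin m → ℝ) : Prop :=
  ∀ i j, ∃ c : ℕ, x i j = (c : ℝ) / k

/-- Empirical (mixed) strategy of population `i` under a pure profile `a` of the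
population game: the average of the unit vectors of the actions of the `k` copies. -/
def emp {n m k : ℕ} (a : Fin n × Fin k → Fin m) : Fin n → Fin m → ℝ :=
  fun i j => ((Finset.univ.filter (fun t : Fin k => a (i, t) = j)).card : ℝ) / k

/-- Payoff in the population game `v = v(u,k)`: copy `p = (i₀,j₀)` plays its own action in
the game `u` against the empirical strategies of the other populations. -/
def popPay {n m k : ℕ} (u : Fin n → (Fin n → Fin m) → ℝ) (p : Fin n × Fin k)
    (a : Fin n × Fin k → Fin m) : ℝ :=
  expPay (u p.1) (Function.update (emp a) p.1 (pureStrat (a p)))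

/-!
Moving copy `q` from `a q` to `b` shifts the empirical strategy of population `q.1` by
`(e_b - e_{a q}) / k` and leaves the other populations unchanged. If `q.1 = p.1`, that
strategy is replaced by `p`'s own action in `p`'s payoff, which therefore does not move.
Otherwise the expected payoff is affine in population `q.1`'s strategy, so `p`'s payoff
changes by `(E b - E (a q)) / k`, where `E c ∈ [0, 1]` is `p`'s payoff when population `q.1`
plays `c` purely.
-/

open Function Finset

lemma pureStrat_nonneg {m : ℕ} (b j : Fin m) : 0 ≤ pureStrat b j := by
  unfold pureStrat; split_ifs <;> norm_num

lemma sum_pureStrat {m : ℕ} (b : Fin m) : ∑ j, pureStrat b j = 1 := by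
  simp [pureStrat]

lemma sum_mul_pureStrat {m : ℕ} (y : Fin m → ℝ) (c : Fin m) :
    ∑ b, y b * pureStrat b c = y c := by
  simp [pureStrat]

lemma sum_pureStrat_mul {m : ℕ} (b : Fin m) (f : Fin m → ℝ) :
    ∑ j, pureStrat b j * f j = f b := by
  simp [pureStrat]

lemma prod_update_apply_eq_mul_prod_erase {ι β M : Type*} [Fintype ι] [DecidableEq ι]
    [CommMonoid M] (x : ι → β → M) (q : ι) (y : β → M) (a : ι → β) :
    ∏ i, update x q y i (a i) = y (a q) * ∏ i ∈ univ.erase q, x i (a i) := by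
  rw [← mul_prod_erase univ _ (mem_univ q), update_self]
  congr 1
  exact prod_congr rfl fun i hi => by rw [update_of_ne (ne_of_mem_erase hi)]

lemma expPay_update_eq_sum {n m : ℕ} (u : (Fin n → Fin m) → ℝ) (x : Fin n → Fin m → ℝ)
    (q : Fin n) (y : Fin m → ℝ) :
    expPay u (update x q y) = ∑ b, y b * expPay u (update x q (pureStrat b)) := by
  simp only [expPay, prod_update_apply_eq_mul_prod_erase, mul_sum]
  rw [sum_comm]
  refine sum_congr rfl fun a _ => ?_
  simp only [← mul_assoc, ← sum_mul, sum_mul_pureStrat]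

lemma expPay_mem_Icc {n m : ℕ} {u : (Fin n → Fin m) → ℝ} (hu : ∀ a, u a ∈ Set.Icc (0 : ℝ) 1)
    {x : Fin n → Fin m → ℝ} (hx : IsMixedProfile x) : expPay u x ∈ Set.Icc (0 : ℝ) 1 := by
  have hprod : ∀ a : Fin n → Fin m, 0 ≤ ∏ i, x i (a i) := fun a =>
    prod_nonneg fun i _ => hx.1 i (a i)
  refine ⟨sum_nonneg fun a _ => mul_nonneg (hprod a) (hu a).1, ?_⟩
  calc expPay u x ≤ ∑ a : Fin n → Fin m, ∏ i, x i (a i) :=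
        sum_le_sum fun a _ => mul_le_of_le_one_right (hprod a) (hu a).2
    _ = ∏ i, ∑ j, x i j := (Fintype.prod_sum x).symm
    _ = 1 := prod_eq_one fun i _ => hx.2 i

lemma IsMixedProfile.update_pureStrat {n m : ℕ} {x : Fin n → Fin m → ℝ} (hx : IsMixedProfile x)
    (i : Fin n) (b : Fin m) : IsMixedProfile (update x i (pureStrat b)) := by
  constructor
  · intro i' j
    rcases eq_or_ne i' i with rfl | h
    · simpa using pureStrat_nonneg b j
    · simpa [update_of_ne h] using hx.1 i' j
  · intro i'
    rcases eq_or_ne i' i with rfl | h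
    · simpa using sum_pureStrat b
    · simpa [update_of_ne h] using hx.2 i'

lemma emp_eq_smul_sum_pureStrat {n m k : ℕ} (a : Fin n × Fin k → Fin m) (i : Fin n) :
    emp a i = (k : ℝ)⁻¹ • ∑ t, pureStrat (a (i, t)) := by
  ext j
  simp only [emp, pureStrat, Pi.smul_apply, Finset.sum_apply, smul_eq_mul, sum_boole,
    div_eq_inv_mul, eq_comm (a := j)]

lemma isMixedProfile_emp {n m k : ℕ} (hk : 0 < k) (a : Fin n × Fin k → Fin m) :
    IsMixedProfile (emp a) := by
  refine ⟨fun i j => by unfold emp; positivity, fun i => ?_⟩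
  simp only [emp_eq_smul_sum_pureStrat, Pi.smul_apply, Finset.sum_apply, smul_eq_mul, ← mul_sum]
  rw [sum_comm]
  simp [sum_pureStrat, hk.ne']

lemma emp_update_of_ne {n m k : ℕ} (a : Fin n × Fin k → Fin m) {q : Fin n × Fin k} (b : Fin m)
    {i : Fin n} (hi : i ≠ q.1) : emp (update a q b) i = emp a i := by
  simp only [emp_eq_smul_sum_pureStrat]
  refine congrArg _ (sum_congr rfl fun t _ => ?_)
  rw [update_of_ne (fun h : (i, t) = q => hi (congrArg Prod.fst h))]

lemma emp_update_eq_update_emp {n m k : ℕ} (a : Fin n × Fin k → Fin m) (q : Fin n × Fin k)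
    (b : Fin m) : emp (update a q b) = update (emp a) q.1 (emp (update a q b) q.1) := by
  ext i : 1
  rcases eq_or_ne i q.1 with rfl | hi
  · rw [update_self]
  · rw [update_of_ne hi, emp_update_of_ne a b hi]

lemma emp_update_self {n m k : ℕ} (a : Fin n × Fin k → Fin m) (q : Fin n × Fin k) (b : Fin m) :
    emp (update a q b) q.1 = emp a q.1 + (k : ℝ)⁻¹ • (pureStrat b - pureStrat (a q)) := by
  have hupd : (fun t => pureStrat (update a q b (q.1, t))) =
      update (fun t => pureStrat (a (q.1, t))) q.2 (pureStrat b) := by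
    ext t : 1
    rcases eq_or_ne t q.2 with rfl | ht
    · simp
    · rw [update_of_ne ht, update_of_ne (fun h => ht (congrArg Prod.snd h))]
  simp only [emp_eq_smul_sum_pureStrat, hupd, sum_update_of_mem (mem_univ q.2),
    ← add_sum_erase univ _ (mem_univ q.2), ← smul_add, sdiff_singleton_eq_erase]
  congr 1
  abel

lemma popPay_update_of_fst_eq {n m k : ℕ} (u : Fin n → (Fin n → Fin m) → ℝ)
    {p q : Fin n × Fin k} (hpq : p ≠ q) (h : q.1 = p.1) (a : Fin n × Fin k → Fin m) (b : Fin m) :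
    popPay u p (update a q b) = popPay u p a := by
  rw [popPay, popPay, update_of_ne hpq, emp_update_eq_update_emp, h, update_idem]

lemma popPay_update_sub_popPay {n m k : ℕ} (u : Fin n → (Fin n → Fin m) → ℝ)
    {p q : Fin n × Fin k} (h : q.1 ≠ p.1) (a : Fin n × Fin k → Fin m) (b : Fin m) :
    popPay u p (update a q b) - popPay u p a =
      (k : ℝ)⁻¹ *
        (expPay (u p.1) (update (update (emp a) p.1 (pureStrat (a p))) q.1 (pureStrat b)) -
          expPay (u p.1) (update (update (emp a) p.1 (pureStrat (a p))) q.1 (pureStrat (a q)))) := by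
  have hpq : p ≠ q := fun hpq => h (hpq ▸ rfl)
  set x := update (emp a) p.1 (pureStrat (a p))
  have hnew :
      popPay u p (update a q b) = expPay (u p.1) (update x q.1 (emp (update a q b) q.1)) := by
    rw [popPay, update_of_ne hpq, emp_update_eq_update_emp, update_comm h, update_self]
  have hold : popPay u p a = expPay (u p.1) (update x q.1 (emp a q.1)) := by
    rw [← update_of_ne h (pureStrat (a p)) (emp a), update_eq_self, popPay]
  rw [hnew, hold, expPay_update_eq_sum, expPay_update_eq_sum, ← sum_sub_distrib, emp_update_self]
  simp only [Pi.add_apply, Pi.smul_apply, Pi.sub_apply, smul_eq_mul, add_mul,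
    add_sub_cancel_left, mul_assoc, ← mul_sum, sub_mul, sum_sub_distrib, sum_pureStrat_mul]

theorem stmt_8_general {n m k : ℕ}
    (u : Fin n → (Fin n → Fin m) → ℝ)
    (hu : ∀ i a, u i a ∈ Set.Icc (0 : ℝ) 1) :
    ∀ p q : Fin n × Fin k, p ≠ q → ∀ (a : Fin n × Fin k → Fin m) (b : Fin m),
      |popPay u p (Function.update a q b) - popPay u p a| ≤ 1 / k := by
  intro p q hpq a b
  rcases eq_or_ne q.1 p.1 with h | h
  · rw [popPay_update_of_fst_eq u hpq h, sub_self, abs_zero]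
    positivity
  · have hx : IsMixedProfile (update (emp a) p.1 (pureStrat (a p))) :=
      (isMixedProfile_emp (Fin.pos p.2) a).update_pureStrat _ _
    have hE := fun c => expPay_mem_Icc (hu p.1) (hx.update_pureStrat q.1 c)
    rw [popPay_update_sub_popPay u h, abs_mul, abs_inv, Nat.abs_cast, one_div]
    exact mul_le_of_le_one_right (by positivity)
      (abs_sub_le_of_nonneg_of_le (hE b).1 (hE b).2 (hE _).1 (hE _).2)

/-- The population game `v = v(u,k)` is `1/k`-Lipschitz: changing the action of a single
player changes any other player's payoff by at most `1/k`. -/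
theorem stmt_8 {n m k : ℕ} (hk : 0 < k)
    (u : Fin n → (Fin n → Fin m) → ℝ)
    (hu : ∀ i a, u i a ∈ Set.Icc (0 : ℝ) 1) :
    ∀ p q : Fin n × Fin k, p ≠ q → ∀ (a : Fin n × Fin k → Fin m) (b : Fin m),
      |popPay u p (Function.update a q b) - popPay u p a| ≤ 1 / k :=
  stmt_8_general u hu
end
end

section
/- With v = v(u,k) the k-fold population game of u as defined above: every pure Nash ε-equilibrium of v induces a k-uniform mixed Nash ε-equilibrium of u, obtained by letting player i of u play the empirical distribution (1/k)·Σⱼ a_{i(j)} of population i. -/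
noncomputable section

/- aux lemmas -/
lemma prod_update_pure {n m : ℕ} (x : Fin n → Fin m → ℝ) (i0 : Fin n)
    (y : Fin m → ℝ) (a : Fin n → Fin m) :
    (∏ i, Function.update x i0 y i (a i)) =
      y (a i0) * ∏ i ∈ Finset.univ.erase i0, x i (a i) := by
  rw [← Finset.mul_prod_erase Finset.univ _ (Finset.mem_univ i0)]
  rw [Function.update_self]
  congr 1
  exact Finset.prod_congr rfl fun i hi => by
    rw [Function.update_of_ne (Finset.ne_of_mem_erase hi)]

lemma expPay_update {n m : ℕ} (u : (Fin n → Fin m) → ℝ) (x : Fin n → Fin m → ℝ)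
    (i0 : Fin n) (y : Fin m → ℝ) :
    expPay u (Function.update x i0 y)
      = ∑ j, y j * expPay u (Function.update x i0 (pureStrat j)) := by
  unfold expPay
  simp only [prod_update_pure, Finset.mul_sum]
  rw [Finset.sum_comm]
  refine Finset.sum_congr rfl fun a _ => ?_
  rw [Finset.sum_eq_single (a i0)]
  · simp [pureStrat]; ring
  · intro j _ hj
    simp [pureStrat, Ne.symm hj]
  · simp

lemma expPay_eq_avg {n m k : ℕ} (hk : 0 < k) (u : (Fin n → Fin m) → ℝ)
    (x : Fin n → Fin m → ℝ) (i0 : Fin n) (f : Fin k → Fin m)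
    (hx : ∀ j, x i0 j = ((Finset.univ.filter (fun t : Fin k => f t = j)).card : ℝ) / k) :
    expPay u x = (∑ t, expPay u (Function.update x i0 (pureStrat (f t)))) / k := by
  have h := expPay_update u x i0 (x i0)
  rw [Function.update_eq_self] at h
  rw [h]
  rw [← Finset.sum_fiberwise Finset.univ f
    (fun t => expPay u (Function.update x i0 (pureStrat (f t))))]
  rw [Finset.sum_div]
  refine Finset.sum_congr rfl fun j _ => ?_
  rw [hx j]
  have : ∑ t ∈ Finset.univ.filter (fun t : Fin k => f t = j),
      expPay u (Function.update x i0 (pureStrat (f t)))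
      = ((Finset.univ.filter (fun t : Fin k => f t = j)).card : ℝ)
        * expPay u (Function.update x i0 (pureStrat j)) := by
    rw [Finset.sum_congr rfl (fun t ht => ?_), Finset.sum_const, nsmul_eq_mul]
    rw [(Finset.mem_filter.mp ht).2]
  rw [this]
  ring

/-- Every pure Nash ε-equilibrium of the population game `v(u,k)` induces a `k`-uniform
mixed Nash ε-equilibrium of `u`: each player of `u` plays the empirical distribution of
his population. -/
theorem stmt_9 {n m k : ℕ} (hk : 0 < k) (hm : 0 < m)
    (u : Fin n → (Fin n → Fin m) → ℝ)
    (hu : ∀ i a, u i a ∈ Set.Icc (0 : ℝ) 1)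
    (ε : ℝ) (hε : 0 ≤ ε)
    (a : Fin n × Fin k → Fin m)
    (hpure : ∀ (p : Fin n × Fin k) (b : Fin m),
      popPay u p (Function.update a p b) - ε ≤ popPay u p a) :
    IsMixedProfile (emp a) ∧ IsKUniform k (emp a) ∧ IsNashEq u (emp a) ε := by
  have hk' : (0 : ℝ) < k := Nat.cast_pos.mpr hk
  refine ⟨⟨fun i j => by unfold emp; positivity, fun i => ?_⟩, fun i j => ⟨_, rfl⟩, ?_⟩
  · unfold emp
    rw [← Finset.sum_div]
    rw [div_eq_one_iff_eq (ne_of_gt hk')]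
    rw [← Nat.cast_sum]
    norm_cast
    exact ((Finset.card_eq_sum_card_fiberwise (fun (t : Fin k) (_ : t ∈ Finset.univ) =>
      Finset.mem_univ (a (i, t)))).symm).trans (by simp)
  · intro i b
    -- key fact: deviation payoffs in v equal deviation payoffs in u
    have hdev : ∀ t : Fin k,
        popPay u (i, t) (Function.update a (i, t) b)
          = expPay (u i) (Function.update (emp a) i (pureStrat b)) := by
      intro t
      unfold popPay
      simp only [Function.update_self]
      congr 1
      funext i' j'
      rcases eq_or_ne i' i with rfl | hne
      · simp [Function.update_self]
      · rw [Function.update_of_ne hne, Function.update_of_ne hne]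
        unfold emp
        have hfe : Finset.filter (fun t' : Fin k =>
              Function.update a (i, t) b (i', t') = j') Finset.univ
            = Finset.filter (fun t' => a (i', t') = j') Finset.univ :=
          Finset.filter_congr fun t' _ => by
            rw [Function.update_of_ne (by simp [hne])]
        rw [hfe]
    -- payoffs at a : popPay u (i,t) a = E (a (i,t))
    have havg : expPay (u i) (emp a)
        = (∑ t, expPay (u i) (Function.update (emp a) i (pureStrat (a (i, t))))) / k :=
      expPay_eq_avg hk (u i) (emp a) i (fun t => a (i, t)) (fun j => rfl)
    have hineq : ∀ t : Fin k,
        expPay (u i) (Function.update (emp a) i (pureStrat b)) - ε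
          ≤ expPay (u i) (Function.update (emp a) i (pureStrat (a (i, t)))) := by
      intro t
      have := hpure (i, t) b
      rw [hdev t] at this
      exact this
    have hsum : (∑ _t : Fin k, (expPay (u i) (Function.update (emp a) i (pureStrat b)) - ε))
        ≤ ∑ t, expPay (u i) (Function.update (emp a) i (pureStrat (a (i, t)))) :=
      Finset.sum_le_sum fun t _ => hineq t
    rw [Finset.sum_const, Finset.card_univ, Fintype.card_fin, nsmul_eq_mul] at hsum
    rw [havg]
    rw [le_div_iff₀ hk']
    linarith [hsum]
end
end
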